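/- Let W have the ABSN(α,β) density g(w) = [(1−αw−βw³)²+1]φ(w)/(2+α²+6αβ+15β²) and let X be standard normal, independent of W. Then P(λW > X) = C(α,β,λ)/(1 + α²/2 + 3αβ + 15β²/2) · (1/2); equivalently ∫ g(w)Φ(λw)dw = C(α,β,λ)/(2 + α² + 6αβ + 15β²). -/

import Mathlib

open Real MeasureTheory Filter
open Set

/-- standard normal pdf -/
noncomputable def phi (z : ℝ) : ℝ := (Real.sqrt (2 * Real.pi))⁻¹ * Real.exp (-z ^ 2 / 2)

/-- standard normal cdf -/
noncomputable def Phi (z : ℝ) : ℝ := ∫ t in Set.Iic z, phi t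

noncomputable def bconst : ℝ := Real.sqrt (2 / Real.pi)

noncomputable def del (l : ℝ) : ℝ := l / Real.sqrt (1 + l ^ 2)

/-- GABSN normalizing constant -/
noncomputable def C (a β l : ℝ) : ℝ :=
  1 + 3 * a * β - a * bconst * del l - β * bconst * del l * (3 + 2 * l ^ 2) / (1 + l ^ 2)
    + a ^ 2 / 2 + 15 * β ^ 2 / 2

/-- GABSN density -/
noncomputable def f (a β l z : ℝ) : ℝ :=
  (((1 - a * z - β * z ^ 3) ^ 2 + 1) * phi z * Phi (l * z)) / C a β l

/-- ABSN density -/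
noncomputable def g (a β w : ℝ) : ℝ :=
  (((1 - a * w - β * w ^ 3) ^ 2 + 1) * phi w) / (2 + a ^ 2 + 6 * a * β + 15 * β ^ 2)

lemma phi_cont : Continuous phi := by
  unfold phi
  exact continuous_const.mul (Real.continuous_exp.comp (by continuity))

lemma phi_even (z : ℝ) : phi (-z) = phi z := by simp [phi]

lemma phi_nonneg (z : ℝ) : 0 ≤ phi z := by unfold phi; positivity

lemma phi_le (z : ℝ) : phi z ≤ (Real.sqrt (2 * Real.pi))⁻¹ := by
  unfold phi
  have h1 : Real.exp (-z ^ 2 / 2) ≤ 1 := by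
    rw [Real.exp_le_one_iff]; nlinarith [sq_nonneg z]
  have h2 : (0:ℝ) ≤ (Real.sqrt (2 * Real.pi))⁻¹ := by positivity
  nlinarith

lemma phi_eq : phi = fun z => (Real.sqrt (2 * Real.pi))⁻¹ * Real.exp (-(1/2 : ℝ) * z ^ 2) := by
  funext z; unfold phi; congr 1; ring_nf

lemma integrable_phi : Integrable phi := by
  rw [phi_eq]
  exact (integrable_exp_neg_mul_sq (by norm_num : (0:ℝ) < 1/2)).const_mul _

lemma integral_phi : ∫ w, phi w = 1 := by
  rw [phi_eq, MeasureTheory.integral_const_mul, integral_gaussian]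
  rw [show Real.pi / (1/2) = 2 * Real.pi by ring]
  rw [inv_mul_cancel₀]
  positivity

lemma hasDerivAt_phi (z : ℝ) : HasDerivAt phi (-z * phi z) z := by
  have h1 : HasDerivAt (fun z : ℝ => -z ^ 2 / 2) (-z) z := by
    have := ((hasDerivAt_pow 2 z).neg.div_const 2)
    refine this.congr_deriv ?_
    norm_num
    ring
  have h2 := (h1.exp.const_mul (Real.sqrt (2 * Real.pi))⁻¹)
  exact h2.congr_deriv (by
  unfold phi; ring)

lemma hasDerivAt_Phi (z : ℝ) : HasDerivAt Phi (phi z) z := by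
  have key : Phi = fun x => Phi 0 + ∫ t in (0:ℝ)..x, phi t := by
    funext x
    have h := intervalIntegral.integral_Iic_sub_Iic
      (integrable_phi.integrableOn (s := Iic (0:ℝ))) (integrable_phi.integrableOn (s := Iic x))
    unfold Phi
    rw [← h]; ring
  have h : HasDerivAt (fun u => ∫ t in (0:ℝ)..u, phi t) (phi z) z :=
    intervalIntegral.integral_hasDerivAt_right integrable_phi.intervalIntegrable
      phi_cont.stronglyMeasurable.stronglyMeasurableAtFilter phi_cont.continuousAt
  rw [key]
  exact h.const_add _

lemma Phi_cont : Continuous Phi :=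
  continuous_iff_continuousAt.2 fun x => (hasDerivAt_Phi x).continuousAt

lemma Phi_nonneg (x : ℝ) : 0 ≤ Phi x :=
  setIntegral_nonneg measurableSet_Iic fun t _ => phi_nonneg t

lemma Phi_le_one (x : ℝ) : Phi x ≤ 1 := by
  have := setIntegral_le_integral (s := Iic x) integrable_phi
    (Filter.Eventually.of_forall fun t => phi_nonneg t)
  rw [integral_phi] at this
  exact this

lemma Phi_add_Phi_neg (x : ℝ) : Phi x + Phi (-x) = 1 := by
  have h1 : Phi (-x) = ∫ t in Set.Ioi x, phi t := by
    have := integral_comp_neg_Iic (-x) phi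
    rw [neg_neg] at this
    rw [Phi, ← this]
    congr 1
    funext t
    exact (phi_even t).symm
  rw [h1, Phi, intervalIntegral.integral_Iic_add_Ioi integrable_phi.integrableOn integrable_phi.integrableOn,
    integral_phi]

lemma integrable_pow_gauss {b : ℝ} (hb : 0 < b) (n : ℕ) :
    Integrable (fun x : ℝ => x ^ n * Real.exp (-b * x ^ 2)) := by
  have hmeas : AEStronglyMeasurable (fun x : ℝ => x ^ n * Real.exp (-b * x ^ 2)) volume :=
    ((continuous_pow n).mul (Real.continuous_exp.comp (by continuity))).aestronglyMeasurable
  refine Integrable.mono'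
    ((integrable_exp_neg_mul_sq (b := b/2) (by linarith)).const_mul
      (((Nat.factorial n) : ℝ) * (2/b) ^ n + 1)) hmeas (Filter.Eventually.of_forall fun x => ?_)
  rw [Real.norm_eq_abs, abs_mul, abs_pow, Real.abs_exp]
  have h1 : (b/2 * x ^ 2) ^ n / ((Nat.factorial n) : ℝ) ≤ Real.exp (b/2 * x ^ 2) :=
    Real.pow_div_factorial_le_exp _ (by positivity) n
  have hfac : (0:ℝ) < Nat.factorial n := by exact_mod_cast Nat.factorial_pos n
  have h1' : (x ^ 2) ^ n ≤ ((Nat.factorial n) : ℝ) * (2/b) ^ n * Real.exp (b/2 * x ^ 2) := by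
    have e1 : (x ^ 2) ^ n = (2/b) ^ n * (b/2 * x ^ 2) ^ n := by
      rw [mul_pow, ← mul_assoc, ← mul_pow]
      rw [show (2/b) * (b/2) = 1 by field_simp]
      simp
    rw [e1]
    rw [div_le_iff₀ hfac] at h1
    calc (2/b) ^ n * (b/2 * x ^ 2) ^ n ≤ (2/b) ^ n * (Real.exp (b/2 * x ^ 2) * Nat.factorial n) := by
          apply mul_le_mul_of_nonneg_left h1 (by positivity)
      _ = ((Nat.factorial n) : ℝ) * (2/b) ^ n * Real.exp (b/2 * x ^ 2) := by ring
  have h2 : |x| ^ n ≤ 1 + (x ^ 2) ^ n := by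
    rcases le_or_gt (|x|) 1 with h | h
    · have := pow_le_one₀ (abs_nonneg x) h (n := n)
      nlinarith [pow_nonneg (sq_nonneg x) n]
    · have : |x| ^ n ≤ (|x| ^ 2) ^ n := by
        apply pow_le_pow_left₀ (abs_nonneg x) _ n
        nlinarith
      rw [sq_abs] at this
      linarith
  have hexp1 : (1:ℝ) ≤ Real.exp (b/2 * x ^ 2) := by
    rw [Real.one_le_exp_iff]; positivity
  have key : |x| ^ n ≤ (((Nat.factorial n) : ℝ) * (2/b) ^ n + 1) * Real.exp (b/2 * x ^ 2) := by nlinarith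
  calc |x| ^ n * Real.exp (-b * x ^ 2)
      ≤ ((((Nat.factorial n) : ℝ) * (2/b) ^ n + 1) * Real.exp (b/2 * x ^ 2)) * Real.exp (-b * x ^ 2) := by
        apply mul_le_mul_of_nonneg_right key (Real.exp_nonneg _)
    _ = (((Nat.factorial n) : ℝ) * (2/b) ^ n + 1) * Real.exp (-(b/2) * x ^ 2) := by
        rw [mul_assoc, ← Real.exp_add]
        congr 2
        ring

lemma integrable_pow_phi (n : ℕ) : Integrable (fun x : ℝ => x ^ n * phi x) := by
  rw [phi_eq]
  have := ((integrable_pow_gauss (by norm_num : (0:ℝ) < 1/2) n).const_mul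
    (Real.sqrt (2 * Real.pi))⁻¹)
  refine this.congr (Filter.Eventually.of_forall fun x => ?_)
  ring

lemma integrable_poly6 (c0 c1 c2 c3 c4 c5 c6 : ℝ) :
    Integrable (fun w : ℝ =>
      (c0 + c1 * w + c2 * w ^ 2 + c3 * w ^ 3 + c4 * w ^ 4 + c5 * w ^ 5 + c6 * w ^ 6) * phi w) := by
  have h := (((((((integrable_pow_phi 0).const_mul c0).add
    ((integrable_pow_phi 1).const_mul c1)).add
    ((integrable_pow_phi 2).const_mul c2)).add
    ((integrable_pow_phi 3).const_mul c3)).add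
    ((integrable_pow_phi 4).const_mul c4)).add
    ((integrable_pow_phi 5).const_mul c5)).add
    ((integrable_pow_phi 6).const_mul c6)
  refine h.congr (Filter.Eventually.of_forall fun x => ?_)
  simp only [Pi.add_apply]
  ring

lemma integrable_bdd_phi {F : ℝ → ℝ} (hF : Continuous F) {M : ℝ} (hM : ∀ x, |F x| ≤ M)
    (c0 c1 c2 c3 c4 c5 c6 : ℝ) :
    Integrable (fun w : ℝ => F w *
      ((c0 + c1 * w + c2 * w ^ 2 + c3 * w ^ 3 + c4 * w ^ 4 + c5 * w ^ 5 + c6 * w ^ 6) * phi w)) :=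
  (integrable_poly6 c0 c1 c2 c3 c4 c5 c6).bdd_mul hF.aestronglyMeasurable
    (Filter.Eventually.of_forall fun x => by rw [Real.norm_eq_abs]; exact hM x)

lemma abs_Phi_le (x : ℝ) : |Phi x| ≤ 1 := by
  rw [abs_of_nonneg (Phi_nonneg x)]; exact Phi_le_one x

lemma integrable_phi_Phi (l : ℝ) : Integrable (fun w => phi w * Phi (l * w)) := by
  have h := integrable_bdd_phi (Phi_cont.comp (continuous_const.mul continuous_id))
    (fun x => abs_Phi_le (l * x)) 1 0 0 0 0 0 0
  refine h.congr (Filter.Eventually.of_forall fun x => ?_)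
  simp only [Function.comp_apply, id_eq, Pi.mul_apply]
  ring

lemma integrable_phi_phi (l : ℝ) : Integrable (fun w => phi w * phi (l * w)) := by
  have hb : ∀ x, |phi (l * x)| ≤ (Real.sqrt (2 * Real.pi))⁻¹ := fun x => by
    rw [abs_of_nonneg (phi_nonneg _)]; exact phi_le _
  have h := integrable_bdd_phi (phi_cont.comp (continuous_const.mul continuous_id))
    hb 1 0 0 0 0 0 0
  refine h.congr (Filter.Eventually.of_forall fun x => ?_)
  simp only [Function.comp_apply, id_eq, Pi.mul_apply]
  ring

lemma integral_phi_Phi (l : ℝ) : ∫ w, phi w * Phi (l * w) = 1 / 2 := by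
  have hint : Integrable (fun w => phi w * Phi (l * w)) := integrable_phi_Phi l
  have hint2 : Integrable (fun w => phi w * Phi (-(l * w))) := by
    have h := integrable_phi_Phi (-l)
    refine h.congr (Filter.Eventually.of_forall fun x => ?_)
    norm_num
  have hneg : ∫ w, phi w * Phi (l * w) = ∫ w, phi w * Phi (-(l * w)) := by
    rw [← integral_neg_eq_self (fun w => phi w * Phi (l * w)) volume]
    congr 1
    funext w
    rw [phi_even]
    norm_num
  have hsum : (∫ w, phi w * Phi (l * w)) + ∫ w, phi w * Phi (-(l * w)) = 1 := by
    rw [← integral_add hint hint2]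
    calc (∫ w, (phi w * Phi (l * w) + phi w * Phi (-(l * w)))) = ∫ w, phi w := by
          congr 1; funext w; rw [← mul_add, Phi_add_Phi_neg, mul_one]
      _ = 1 := integral_phi
  linarith

lemma integral_phi_phi (l : ℝ) :
    ∫ w, phi w * phi (l * w) = Real.sqrt (2 / Real.pi) / (2 * Real.sqrt (1 + l ^ 2)) := by
  have hkey : (fun w => phi w * phi (l * w))
      = fun w => (2 * Real.pi)⁻¹ * Real.exp (-((1 + l ^ 2) / 2) * w ^ 2) := by
    funext w
    simp only [phi]
    rw [show ((Real.sqrt (2 * Real.pi))⁻¹ * Real.exp (-w ^ 2 / 2)) *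
        ((Real.sqrt (2 * Real.pi))⁻¹ * Real.exp (-(l * w) ^ 2 / 2))
      = (Real.sqrt (2 * Real.pi) * Real.sqrt (2 * Real.pi))⁻¹ *
        (Real.exp (-w ^ 2 / 2) * Real.exp (-(l * w) ^ 2 / 2)) by rw [mul_inv]; ring]
    rw [Real.mul_self_sqrt (by positivity), ← Real.exp_add]
    congr 1
    ring
  rw [hkey, MeasureTheory.integral_const_mul, integral_gaussian]
  have hs : (0:ℝ) < 1 + l ^ 2 := by positivity
  rw [show Real.pi / ((1 + l ^ 2) / 2) = 2 * Real.pi / (1 + l ^ 2) by rw [div_div_eq_mul_div, mul_comm]]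
  rw [Real.sqrt_div (by positivity : (0:ℝ) ≤ 2 * Real.pi),
    Real.sqrt_mul (by norm_num : (0:ℝ) ≤ 2),
    Real.sqrt_div (by norm_num : (0:ℝ) ≤ 2)]
  have hpi : Real.sqrt Real.pi * Real.sqrt Real.pi = Real.pi :=
    Real.mul_self_sqrt Real.pi_pos.le
  have hpi0 : Real.sqrt Real.pi ≠ 0 := by positivity
  have hs0 : Real.sqrt (1 + l ^ 2) ≠ 0 := by positivity
  have hpp : Real.pi ≠ 0 := Real.pi_ne_zero
  field_simp
  linear_combination hpi

lemma tendsto_pow_phi_atTop (n : ℕ) :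
    Tendsto (fun w : ℝ => w ^ n * phi w) atTop (nhds 0) := by
  have hlim : Tendsto (fun w : ℝ =>
      (Real.sqrt (2 * Real.pi))⁻¹ * Real.exp (1/2) * (w ^ n * Real.exp (-w))) atTop (nhds 0) := by
    have := (Real.tendsto_pow_mul_exp_neg_atTop_nhds_zero n).const_mul
      ((Real.sqrt (2 * Real.pi))⁻¹ * Real.exp (1/2))
    simpa using this
  apply squeeze_zero_norm' _ hlim
  filter_upwards [eventually_ge_atTop (0:ℝ)] with w hw
  rw [Real.norm_eq_abs, abs_mul, abs_pow, abs_of_nonneg hw, abs_of_nonneg (phi_nonneg w)]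
  have h1 : phi w ≤ (Real.sqrt (2 * Real.pi))⁻¹ * Real.exp (1/2) * Real.exp (-w) := by
    unfold phi
    rw [mul_assoc, ← Real.exp_add]
    apply mul_le_mul_of_nonneg_left _ (by positivity)
    apply Real.exp_le_exp.2
    nlinarith [sq_nonneg (w - 1)]
  calc w ^ n * phi w ≤ w ^ n * ((Real.sqrt (2 * Real.pi))⁻¹ * Real.exp (1/2) * Real.exp (-w)) :=
        mul_le_mul_of_nonneg_left h1 (pow_nonneg hw n)
    _ = (Real.sqrt (2 * Real.pi))⁻¹ * Real.exp (1/2) * (w ^ n * Real.exp (-w)) := by ring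

lemma tendsto_pow_phi_atBot (n : ℕ) :
    Tendsto (fun w : ℝ => w ^ n * phi w) atBot (nhds 0) := by
  have h := ((tendsto_pow_phi_atTop n).comp tendsto_neg_atBot_atTop).const_mul ((-1:ℝ) ^ n)
  rw [mul_zero] at h
  refine h.congr fun w => ?_
  simp only [Function.comp_apply]
  rw [phi_even, ← mul_assoc, ← mul_pow]
  norm_num

noncomputable def pp (a β : ℝ) (w : ℝ) : ℝ :=
  (2 * a + 4 * β) - (a ^ 2 + 6 * a * β + 15 * β ^ 2) * w + 2 * β * w ^ 2
    - (2 * a * β + 5 * β ^ 2) * w ^ 3 - β ^ 2 * w ^ 5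

noncomputable def pp' (a β : ℝ) (w : ℝ) : ℝ :=
  -(a ^ 2 + 6 * a * β + 15 * β ^ 2) + 4 * β * w
    - 3 * (2 * a * β + 5 * β ^ 2) * w ^ 2 - 5 * β ^ 2 * w ^ 4

noncomputable def qq (a β l : ℝ) (w : ℝ) : ℝ :=
  (l * (-(a ^ 2 + 6 * a * β + 15 * β ^ 2))
      + 2 * ((l * (-(2 * a * β + 5 * β ^ 2)) + 4 * (-(l * β ^ 2) / (1 + l ^ 2))) / (1 + l ^ 2)))
        / (1 + l ^ 2)
    + (2 * β * l / (1 + l ^ 2)) * w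
    + ((l * (-(2 * a * β + 5 * β ^ 2)) + 4 * (-(l * β ^ 2) / (1 + l ^ 2))) / (1 + l ^ 2)) * w ^ 2
    + (-(l * β ^ 2) / (1 + l ^ 2)) * w ^ 4

noncomputable def qq' (a β l : ℝ) (w : ℝ) : ℝ :=
  (2 * β * l / (1 + l ^ 2))
    + 2 * ((l * (-(2 * a * β + 5 * β ^ 2)) + 4 * (-(l * β ^ 2) / (1 + l ^ 2))) / (1 + l ^ 2)) * w
    + 4 * (-(l * β ^ 2) / (1 + l ^ 2)) * w ^ 3

noncomputable def cc (a β : ℝ) : ℝ := 2 + a ^ 2 + 6 * a * β + 15 * β ^ 2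

noncomputable def dd (a β l : ℝ) : ℝ := -(l * (2 * a + 4 * β) + 2 * β * l / (1 + l ^ 2))

noncomputable def DD (a β l : ℝ) (w : ℝ) : ℝ :=
  (pp a β w * Phi (l * w) + qq a β l w * phi (l * w)) * phi w

lemma hasDerivAt_pp (a β w : ℝ) : HasDerivAt (pp a β) (pp' a β w) w := by
  unfold pp pp'
  have h : HasDerivAt (fun w : ℝ => (2 * a + 4 * β) - (a ^ 2 + 6 * a * β + 15 * β ^ 2) * w
      + 2 * β * w ^ 2 - (2 * a * β + 5 * β ^ 2) * w ^ 3 - β ^ 2 * w ^ 5)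
      (0 - (a ^ 2 + 6 * a * β + 15 * β ^ 2) * 1 + 2 * β * (2 * w ^ 1)
        - (2 * a * β + 5 * β ^ 2) * (3 * w ^ 2) - β ^ 2 * (5 * w ^ 4)) w := by
    exact ((((hasDerivAt_const w _).sub ((hasDerivAt_id w).const_mul _)).add
      ((hasDerivAt_pow 2 w).const_mul _)).sub ((hasDerivAt_pow 3 w).const_mul _)).sub
      ((hasDerivAt_pow 5 w).const_mul _)
  convert h using 1
  ring

lemma hasDerivAt_qq (a β l w : ℝ) : HasDerivAt (qq a β l) (qq' a β l w) w := by
  unfold qq qq'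
  have h : HasDerivAt (fun w : ℝ =>
      (l * (-(a ^ 2 + 6 * a * β + 15 * β ^ 2))
        + 2 * ((l * (-(2 * a * β + 5 * β ^ 2)) + 4 * (-(l * β ^ 2) / (1 + l ^ 2))) / (1 + l ^ 2)))
          / (1 + l ^ 2)
      + (2 * β * l / (1 + l ^ 2)) * w
      + ((l * (-(2 * a * β + 5 * β ^ 2)) + 4 * (-(l * β ^ 2) / (1 + l ^ 2))) / (1 + l ^ 2)) * w ^ 2
      + (-(l * β ^ 2) / (1 + l ^ 2)) * w ^ 4)
      (0 + (2 * β * l / (1 + l ^ 2)) * 1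
        + ((l * (-(2 * a * β + 5 * β ^ 2)) + 4 * (-(l * β ^ 2) / (1 + l ^ 2))) / (1 + l ^ 2))
          * (2 * w ^ 1)
        + (-(l * β ^ 2) / (1 + l ^ 2)) * (4 * w ^ 3)) w := by
    exact (((hasDerivAt_const w _).add ((hasDerivAt_id w).const_mul _)).add
      ((hasDerivAt_pow 2 w).const_mul _)).add ((hasDerivAt_pow 4 w).const_mul _)
  convert h using 1
  ring

lemma hasDerivAt_DD (a β l w : ℝ) :
    HasDerivAt (DD a β l)
      (((1 - a * w - β * w ^ 3) ^ 2 + 1) * phi w * Phi (l * w)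
        - cc a β * (phi w * Phi (l * w)) - dd a β l * (phi w * phi (l * w))) w := by
  have hl : HasDerivAt (fun x : ℝ => l * x) l w := by
    simpa using (hasDerivAt_id w).const_mul l
  have hPhil : HasDerivAt (fun x : ℝ => Phi (l * x)) (phi (l * w) * l) w :=
    (hasDerivAt_Phi (l * w)).comp w hl
  have hphil : HasDerivAt (fun x : ℝ => phi (l * x)) ((-(l * w) * phi (l * w)) * l) w :=
    (hasDerivAt_phi (l * w)).comp w hl
  have hA : HasDerivAt (fun x => pp a β x * Phi (l * x))
      (pp' a β w * Phi (l * w) + pp a β w * (phi (l * w) * l)) w :=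
    (hasDerivAt_pp a β w).mul hPhil
  have hB : HasDerivAt (fun x => qq a β l x * phi (l * x))
      (qq' a β l w * phi (l * w) + qq a β l w * ((-(l * w) * phi (l * w)) * l)) w :=
    (hasDerivAt_qq a β l w).mul hphil
  have hD : HasDerivAt (DD a β l)
      ((pp' a β w * Phi (l * w) + pp a β w * (phi (l * w) * l)
          + (qq' a β l w * phi (l * w) + qq a β l w * ((-(l * w) * phi (l * w)) * l))) * phi w
        + (pp a β w * Phi (l * w) + qq a β l w * phi (l * w)) * (-w * phi w)) w :=
    (hA.add hB).mul (hasDerivAt_phi w)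
  convert hD using 1
  unfold pp pp' qq qq' cc dd
  have hs : (1 + l ^ 2) ≠ 0 := by positivity
  field_simp
  ring

lemma tendsto_poly_phi {L : Filter ℝ}
    (h : ∀ n, Tendsto (fun w : ℝ => w ^ n * phi w) L (nhds 0)) (c0 c1 c2 c3 c4 c5 c6 : ℝ) :
    Tendsto (fun w : ℝ =>
      (c0 + c1 * w + c2 * w ^ 2 + c3 * w ^ 3 + c4 * w ^ 4 + c5 * w ^ 5 + c6 * w ^ 6) * phi w)
      L (nhds 0) := by
  have H := (((((((h 0).const_mul c0).add ((h 1).const_mul c1)).add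
    ((h 2).const_mul c2)).add ((h 3).const_mul c3)).add ((h 4).const_mul c4)).add
    ((h 5).const_mul c5)).add ((h 6).const_mul c6)
  simp only [mul_zero, add_zero] at H
  refine H.congr fun w => ?_
  ring

lemma tendsto_DD (a β l : ℝ) (L : Filter ℝ)
    (h : ∀ n, Tendsto (fun w : ℝ => w ^ n * phi w) L (nhds 0)) :
    Tendsto (DD a β l) L (nhds 0) := by
  have hpp : Tendsto (fun w => pp a β w * phi w) L (nhds 0) := by
    refine (tendsto_poly_phi h (2 * a + 4 * β) (-(a ^ 2 + 6 * a * β + 15 * β ^ 2)) (2 * β)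
      (-(2 * a * β + 5 * β ^ 2)) 0 (-β ^ 2) 0).congr fun w => ?_
    unfold pp; ring
  have hqq : Tendsto (fun w => qq a β l w * phi w) L (nhds 0) := by
    refine (tendsto_poly_phi h
      ((l * (-(a ^ 2 + 6 * a * β + 15 * β ^ 2))
        + 2 * ((l * (-(2 * a * β + 5 * β ^ 2)) + 4 * (-(l * β ^ 2) / (1 + l ^ 2))) / (1 + l ^ 2)))
          / (1 + l ^ 2))
      (2 * β * l / (1 + l ^ 2))
      ((l * (-(2 * a * β + 5 * β ^ 2)) + 4 * (-(l * β ^ 2) / (1 + l ^ 2))) / (1 + l ^ 2))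
      0 (-(l * β ^ 2) / (1 + l ^ 2)) 0 0).congr fun w => ?_
    unfold qq; ring
  have hb1 : IsBoundedUnder (· ≤ ·) L ((‖·‖) ∘ fun w : ℝ => Phi (l * w)) :=
    isBoundedUnder_of ⟨1, fun w => by simpa [Real.norm_eq_abs] using abs_Phi_le (l * w)⟩
  have hb2 : IsBoundedUnder (· ≤ ·) L ((‖·‖) ∘ fun w : ℝ => phi (l * w)) :=
    isBoundedUnder_of ⟨(Real.sqrt (2 * Real.pi))⁻¹, fun w => by
      simp only [Function.comp_apply, Real.norm_eq_abs, abs_of_nonneg (phi_nonneg _)]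
      exact phi_le _⟩
  have h1 := hpp.zero_mul_isBoundedUnder_le hb1
  have h2 := hqq.zero_mul_isBoundedUnder_le hb2
  have H := h1.add h2
  rw [add_zero] at H
  refine H.congr fun w => ?_
  unfold DD
  ring

lemma key (a β l : ℝ) :
    ∫ w : ℝ, ((1 - a * w - β * w ^ 3) ^ 2 + 1) * phi w * Phi (l * w)
      = cc a β * (1 / 2) + dd a β l * (Real.sqrt (2 / Real.pi) / (2 * Real.sqrt (1 + l ^ 2))) := by
  have hT : Integrable (fun w : ℝ => ((1 - a * w - β * w ^ 3) ^ 2 + 1) * phi w * Phi (l * w)) := by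
    have h := integrable_bdd_phi (Phi_cont.comp (continuous_const.mul continuous_id))
      (fun x => abs_Phi_le (l * x)) 2 (-2 * a) (a ^ 2) (-2 * β) (2 * a * β) 0 (β ^ 2)
    refine h.congr (Filter.Eventually.of_forall fun x => ?_)
    simp only [Function.comp_apply, id_eq, Pi.mul_apply]
    ring
  have hφΦ := integrable_phi_Phi l
  have hφφ := integrable_phi_phi l
  have hD' : Integrable (fun w : ℝ =>
      ((1 - a * w - β * w ^ 3) ^ 2 + 1) * phi w * Phi (l * w)
        - cc a β * (phi w * Phi (l * w)) - dd a β l * (phi w * phi (l * w))) :=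
    (hT.sub (hφΦ.const_mul _)).sub (hφφ.const_mul _)
  have hzero : (∫ w : ℝ, (((1 - a * w - β * w ^ 3) ^ 2 + 1) * phi w * Phi (l * w)
      - cc a β * (phi w * Phi (l * w)) - dd a β l * (phi w * phi (l * w)))) = 0 := by
    rw [← intervalIntegral.integral_Iic_add_Ioi (b := (0:ℝ)) hD'.integrableOn hD'.integrableOn]
    rw [integral_Iic_of_hasDerivAt_of_tendsto' (fun x _ => hasDerivAt_DD a β l x)
        hD'.integrableOn (tendsto_DD a β l atBot tendsto_pow_phi_atBot),
      integral_Ioi_of_hasDerivAt_of_tendsto' (fun x _ => hasDerivAt_DD a β l x)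
        hD'.integrableOn (tendsto_DD a β l atTop tendsto_pow_phi_atTop)]
    ring
  have hsplit : (fun w : ℝ => ((1 - a * w - β * w ^ 3) ^ 2 + 1) * phi w * Phi (l * w))
      = fun w : ℝ => (((1 - a * w - β * w ^ 3) ^ 2 + 1) * phi w * Phi (l * w)
          - cc a β * (phi w * Phi (l * w)) - dd a β l * (phi w * phi (l * w)))
        + (cc a β * (phi w * Phi (l * w)) + dd a β l * (phi w * phi (l * w))) := by
    funext w; ring
  have h1 : Integrable (fun w : ℝ => cc a β * (phi w * Phi (l * w))) := hφΦ.const_mul _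
  have h2 : Integrable (fun w : ℝ => dd a β l * (phi w * phi (l * w))) := hφφ.const_mul _
  have h12 : Integrable (fun w : ℝ => cc a β * (phi w * Phi (l * w))
      + dd a β l * (phi w * phi (l * w))) := h1.add h2
  rw [hsplit, integral_add hD' h12, hzero, integral_add h1 h2, MeasureTheory.integral_const_mul,
    MeasureTheory.integral_const_mul, integral_phi_Phi, integral_phi_phi, zero_add]

lemma alg (a β l : ℝ) :
    cc a β * (1 / 2) + dd a β l * (Real.sqrt (2 / Real.pi) / (2 * Real.sqrt (1 + l ^ 2)))
      = C a β l := by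
  unfold cc dd C bconst del
  have hu : Real.sqrt (1 + l ^ 2) ^ 2 = 1 + l ^ 2 := Real.sq_sqrt (by positivity)
  have hu0 : Real.sqrt (1 + l ^ 2) ≠ 0 := by positivity
  have hs : (1 : ℝ) + l ^ 2 ≠ 0 := by positivity
  field_simp
  ring

theorem stmt_17 (a β l : ℝ) :
    ∫ w : ℝ, g a β w * Phi (l * w)
      = C a β l / (2 + a ^ 2 + 6 * a * β + 15 * β ^ 2) := by
  have hre : (fun w : ℝ => g a β w * Phi (l * w))
      = fun w : ℝ => (((1 - a * w - β * w ^ 3) ^ 2 + 1) * phi w * Phi (l * w))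
          / (2 + a ^ 2 + 6 * a * β + 15 * β ^ 2) := by
    funext w
    unfold g
    ring
  rw [hre, integral_div, key, alg]
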